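/- Let U, Uκ, Û, F, F̂, uκ, α be real numbers with 0 ≤ uκ ≤ 1, F = probability-type value in [0,1], and suppose: (i) |Û - Uκ| ≤ (1 - uκ)·α, (ii) |F̂ - F| ≤ α, (iii) Uκ - uκ·(1 - F) ≤ U ≤ Uκ. Define UCB = Û + (1 - uκ)·α and LCB = Û - α - uκ·(1 - F̂). Then LCB ≤ U ≤ UCB. -/
import Mathlib

theorem stmt_6 (U Uκ Uhat F Fhat uκ α : ℝ)
    (huκ : 0 ≤ uκ) (huκ1 : uκ ≤ 1) (hF0 : 0 ≤ F) (hF1 : F ≤ 1)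
    (h1 : |Uhat - Uκ| ≤ (1 - uκ) * α)
    (h2 : |Fhat - F| ≤ α)
    (h3 : Uκ - uκ * (1 - F) ≤ U) (h4 : U ≤ Uκ) :
    Uhat - α - uκ * (1 - Fhat) ≤ U ∧ U ≤ Uhat + (1 - uκ) * α := by
  rw [abs_le] at h1 h2
  constructor <;> nlinarith [h1.1, h1.2, h2.1, h2.2, mul_le_mul_of_nonneg_left h2.2 huκ, mul_le_mul_of_nonneg_left h2.1 huκ]
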